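/- Let γ, D > 0, c ∈ ℝ, let ν̃(c) < 0 < μ̃(c) be the roots of Dz² − cz − γ = 0, and define k̃₁(s) := (c² + 4Dγ)^{−1/2}·e^{ν̃(c)s} for s ≥ 0 and k̃₁(s) := (c² + 4Dγ)^{−1/2}·e^{μ̃(c)s} for s < 0. Assume (H0) for K and (H1) for g, and let φ : ℝ → ℝ₊ be a bounded continuous function with lim_{t→−∞} φ(t) = 0. Define (ℋφ)(t) := g(φ(t)) − ∫₀^∞∫_ℝ K(s,w)·g(φ(t − cs − w)) dw ds and ψ(t) := ∫_ℝ k̃₁(t−s)·(ℋφ)(s) ds. Then ψ is well defined and bounded, ψ is twice continuously differentiable and satisfies D·ψ''(t) − c·ψ'(t) − γ·ψ(t) + (ℋφ)(t) = 0 for all t ∈ ℝ, and lim_{t→−∞} ψ(t) = 0. -/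

import Mathlib

open MeasureTheory Filter Set

noncomputable section

/-- the negative root `ν̃(c)` of `Dz² - cz - γ = 0`. -/
def nuTilde (D γ c : ℝ) : ℝ := (c - Real.sqrt (c ^ 2 + 4 * D * γ)) / (2 * D)

/-- the positive root `μ̃(c)` of `Dz² - cz - γ = 0`. -/
def muTilde (D γ c : ℝ) : ℝ := (c + Real.sqrt (c ^ 2 + 4 * D * γ)) / (2 * D)

/-- the Green's function kernel `k̃₁` of `D y'' - c y' - γ y`. -/
def k1Tilde (D γ c : ℝ) (s : ℝ) : ℝ :=
  if 0 ≤ s then Real.exp (nuTilde D γ c * s) / Real.sqrt (c ^ 2 + 4 * D * γ)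
  else Real.exp (muTilde D γ c * s) / Real.sqrt (c ^ 2 + 4 * D * γ)

/-- `(ℋφ)(t) = g(φ(t)) - ∫₀^∞∫_ℝ K(s,w) g(φ(t - cs - w)) dw ds`. -/
def Hop (K : ℝ → ℝ → ℝ) (g : ℝ → ℝ) (c : ℝ) (φ : ℝ → ℝ) (t : ℝ) : ℝ :=
  g (φ t) - ∫ s in Set.Ioi (0:ℝ), ∫ w : ℝ, K s w * g (φ (t - c * s - w))

/-- `ψ(t) = ∫_ℝ k̃₁(t - s) (ℋφ)(s) ds`. -/
def psiImm (K : ℝ → ℝ → ℝ) (g : ℝ → ℝ) (D γ c : ℝ) (φ : ℝ → ℝ) (t : ℝ) : ℝ :=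
  ∫ s : ℝ, k1Tilde D γ c (t - s) * Hop K g c φ s

/-!
`ψ` is the convolution of `ℋφ` with the Green's function `k̃₁` of `D y'' - c y' - γ y`.
Splitting the integral at `s = t` writes `ψ(t) √(c² + 4Dγ)` as
`e^{ν̃t} ∫_{-∞}^t e^{-ν̃s} ℋφ(s) ds + e^{μ̃t} ∫_t^∞ e^{-μ̃s} ℋφ(s) ds`,
which the fundamental theorem of calculus differentiates twice: the boundary terms
contribute `D (ν̃ - μ̃) ℋφ / √(c² + 4Dγ) = -ℋφ`, and everything else cancels because `ν̃`
and `μ̃` are roots of `Dz² - cz - γ`. Boundedness and the limit at `-∞` come from dominated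
convergence, since `K` and `k̃₁` are integrable while `g ∘ φ`, hence `ℋφ`, is bounded,
continuous and vanishes at `-∞`.
-/

open Real Topology

section ShiftedAverage

variable {α : Type*} {κ τ : α → ℝ} {h : ℝ → ℝ} {C : ℝ}

lemma norm_mul_comp_sub_le (hC : ∀ t, |h t| ≤ C) (t : ℝ) (x : α) :
    ‖κ x * h (t - τ x)‖ ≤ ‖κ x‖ * C := by
  rw [norm_mul]
  exact mul_le_mul_of_nonneg_left (hC _) (norm_nonneg _)

variable [MeasurableSpace α] {μ : Measure α}

lemma aestronglyMeasurable_mul_comp_sub (hκ : Integrable κ μ) (hτ : Measurable τ)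
    (hh : Continuous h) (t : ℝ) : AEStronglyMeasurable (fun x => κ x * h (t - τ x)) μ :=
  hκ.aestronglyMeasurable.mul (hh.measurable.comp (measurable_const.sub hτ)).aestronglyMeasurable

lemma integrable_mul_comp_sub (hκ : Integrable κ μ) (hτ : Measurable τ) (hh : Continuous h)
    (hC : ∀ t, |h t| ≤ C) (t : ℝ) : Integrable (fun x => κ x * h (t - τ x)) μ :=
  (hκ.norm.mul_const C).mono' (aestronglyMeasurable_mul_comp_sub hκ hτ hh t)
    (ae_of_all _ (norm_mul_comp_sub_le hC t))

lemma abs_integral_mul_comp_sub_le (hκ : Integrable κ μ) (hC : ∀ t, |h t| ≤ C) (t : ℝ) :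
    |∫ x, κ x * h (t - τ x) ∂μ| ≤ (∫ x, ‖κ x‖ ∂μ) * C := by
  rw [← integral_mul_const]
  exact norm_integral_le_of_norm_le (hκ.norm.mul_const C) (ae_of_all _ (norm_mul_comp_sub_le hC t))

lemma continuous_integral_mul_comp_sub (hκ : Integrable κ μ) (hτ : Measurable τ)
    (hh : Continuous h) (hC : ∀ t, |h t| ≤ C) :
    Continuous fun t => ∫ x, κ x * h (t - τ x) ∂μ :=
  continuous_of_dominated (aestronglyMeasurable_mul_comp_sub hκ hτ hh)
    (fun t => ae_of_all _ (norm_mul_comp_sub_le hC t)) (hκ.norm.mul_const C)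
    (ae_of_all _ fun _ => by fun_prop)

lemma tendsto_integral_mul_comp_sub_atBot (hκ : Integrable κ μ) (hτ : Measurable τ)
    (hh : Continuous h) (hC : ∀ t, |h t| ≤ C) (hh0 : Tendsto h atBot (𝓝 0)) :
    Tendsto (fun t => ∫ x, κ x * h (t - τ x) ∂μ) atBot (𝓝 0) := by
  have hlim : ∀ x, Tendsto (fun t => κ x * h (t - τ x)) atBot (𝓝 0) := fun x => by
    simpa [sub_eq_add_neg] using
      (hh0.comp (tendsto_atBot_add_const_right _ (-τ x) tendsto_id)).const_mul (κ x)
  simpa using tendsto_integral_filter_of_dominated_convergence _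
    (.of_forall (aestronglyMeasurable_mul_comp_sub hκ hτ hh))
    (.of_forall fun t => ae_of_all _ (norm_mul_comp_sub_le hC t)) (hκ.norm.mul_const C)
    (ae_of_all _ hlim)

end ShiftedAverage

section ContinuousOnIci

variable {g φ : ℝ → ℝ}

lemma exists_abs_comp_le (hgc : ContinuousOn g (Ici 0)) (hφnn : ∀ t, 0 ≤ φ t)
    (hφbdd : ∃ M, ∀ t, |φ t| ≤ M) : ∃ C, ∀ t, |g (φ t)| ≤ C := by
  obtain ⟨M, hM⟩ := hφbdd
  obtain ⟨C, hC⟩ := isCompact_Icc.exists_bound_of_continuousOn (hgc.mono Icc_subset_Ici_self)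
  exact ⟨C, fun t => hC _ ⟨hφnn t, (le_abs_self _).trans (hM t)⟩⟩

lemma tendsto_comp_atBot (hgc : ContinuousOn g (Ici 0)) (hg0 : g 0 = 0)
    (hφnn : ∀ t, 0 ≤ φ t) (hφbot : Tendsto φ atBot (𝓝 0)) :
    Tendsto (fun t => g (φ t)) atBot (𝓝 0) :=
  hg0 ▸ (hgc 0 self_mem_Ici).tendsto.comp
    (tendsto_nhdsWithin_iff.mpr ⟨hφbot, .of_forall hφnn⟩)

end ContinuousOnIci

section Hop

variable {K : ℝ → ℝ → ℝ} {g φ : ℝ → ℝ} {c C : ℝ}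

lemma Hop_eq_sub_setIntegral (hK : IntegrableOn (fun x : ℝ × ℝ => K x.1 x.2) (Ioi 0 ×ˢ univ))
    (hG : Continuous fun t => g (φ t)) (hC : ∀ t, |g (φ t)| ≤ C) (t : ℝ) :
    Hop K g c φ t =
      g (φ t) - ∫ x in Ioi 0 ×ˢ univ, K x.1 x.2 * g (φ (t - (c * x.1 + x.2))) := by
  have hint := integrable_mul_comp_sub (h := fun t => g (φ t)) (τ := fun x => c * x.1 + x.2) hK
    (by fun_prop) hG hC t
  rw [Measure.volume_eq_prod] at hint ⊢
  simp only [Hop, setIntegral_prod _ hint, Measure.restrict_univ, sub_sub]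

lemma continuous_Hop (hK : IntegrableOn (fun x : ℝ × ℝ => K x.1 x.2) (Ioi 0 ×ˢ univ))
    (hG : Continuous fun t => g (φ t)) (hC : ∀ t, |g (φ t)| ≤ C) :
    Continuous (Hop K g c φ) := by
  rw [funext (Hop_eq_sub_setIntegral hK hG hC)]
  exact hG.sub (continuous_integral_mul_comp_sub (h := fun t => g (φ t)) hK (by fun_prop) hG hC)

lemma abs_Hop_le (hK : IntegrableOn (fun x : ℝ × ℝ => K x.1 x.2) (Ioi 0 ×ˢ univ))
    (hG : Continuous fun t => g (φ t)) (hC : ∀ t, |g (φ t)| ≤ C) (t : ℝ) :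
    |Hop K g c φ t| ≤ C + (∫ x in Ioi 0 ×ˢ univ, ‖K x.1 x.2‖) * C := by
  rw [Hop_eq_sub_setIntegral hK hG hC]
  exact (abs_sub _ _).trans (add_le_add (hC t)
    (abs_integral_mul_comp_sub_le (h := fun t => g (φ t)) hK hC t))

lemma tendsto_Hop_atBot (hK : IntegrableOn (fun x : ℝ × ℝ => K x.1 x.2) (Ioi 0 ×ˢ univ))
    (hG : Continuous fun t => g (φ t)) (hC : ∀ t, |g (φ t)| ≤ C)
    (hG0 : Tendsto (fun t => g (φ t)) atBot (𝓝 0)) :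
    Tendsto (Hop K g c φ) atBot (𝓝 0) := by
  rw [funext (Hop_eq_sub_setIntegral hK hG hC)]
  simpa using hG0.sub
    (tendsto_integral_mul_comp_sub_atBot (h := fun t => g (φ t)) hK (by fun_prop) hG hC hG0)

end Hop

section Roots

variable {D γ c : ℝ}

lemma abs_lt_sqrt_discr (hD : 0 < D) (hγ : 0 < γ) : |c| < √(c ^ 2 + 4 * D * γ) :=
  (Real.lt_sqrt (abs_nonneg c)).mpr (by rw [sq_abs]; nlinarith [mul_pos hD hγ])

lemma nuTilde_neg (hD : 0 < D) (hγ : 0 < γ) : nuTilde D γ c < 0 :=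
  div_neg_of_neg_of_pos (by linarith [le_abs_self c, abs_lt_sqrt_discr (c := c) hD hγ])
    (by positivity)

lemma muTilde_pos (hD : 0 < D) (hγ : 0 < γ) : 0 < muTilde D γ c :=
  div_pos (by linarith [neg_le_abs c, abs_lt_sqrt_discr (c := c) hD hγ]) (by positivity)

lemma nuTilde_isRoot (hD : 0 < D) (hγ : 0 < γ) :
    D * nuTilde D γ c ^ 2 - c * nuTilde D γ c - γ = 0 := by
  have hr := Real.sq_sqrt (show 0 ≤ c ^ 2 + 4 * D * γ by positivity)
  unfold nuTilde
  set r := √(c ^ 2 + 4 * D * γ)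
  field_simp
  linear_combination hr

lemma muTilde_isRoot (hD : 0 < D) (hγ : 0 < γ) :
    D * muTilde D γ c ^ 2 - c * muTilde D γ c - γ = 0 := by
  have hr := Real.sq_sqrt (show 0 ≤ c ^ 2 + 4 * D * γ by positivity)
  unfold muTilde
  set r := √(c ^ 2 + 4 * D * γ)
  field_simp
  linear_combination hr

lemma mul_nuTilde_sub_muTilde (hD : 0 < D) :
    D * (nuTilde D γ c - muTilde D γ c) = -√(c ^ 2 + 4 * D * γ) := by
  unfold nuTilde muTilde
  field_simp
  ring

end Roots

section Kernel

variable {D γ c : ℝ}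

lemma k1Tilde_of_nonneg {s : ℝ} (hs : 0 ≤ s) :
    k1Tilde D γ c s = exp (nuTilde D γ c * s) / √(c ^ 2 + 4 * D * γ) := if_pos hs

lemma k1Tilde_of_neg {s : ℝ} (hs : s < 0) :
    k1Tilde D γ c s = exp (muTilde D γ c * s) / √(c ^ 2 + 4 * D * γ) := if_neg hs.not_ge

lemma integrable_k1Tilde (hD : 0 < D) (hγ : 0 < γ) : Integrable (k1Tilde D γ c) := by
  have hIci : IntegrableOn (k1Tilde D γ c) (Ici 0) :=
    ((integrableOn_Ici_iff_integrableOn_Ioi).mpr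
      ((integrableOn_exp_mul_Ioi (nuTilde_neg hD hγ) 0).div_const _)).congr_fun
      (fun _ hs => (k1Tilde_of_nonneg hs).symm) measurableSet_Ici
  have hIio : IntegrableOn (k1Tilde D γ c) (Iio 0) :=
    (IntegrableOn.mono_set ((integrableOn_exp_mul_Iic (muTilde_pos hD hγ) 0).div_const _)
      Iio_subset_Iic_self).congr_fun (fun _ hs => (k1Tilde_of_neg hs).symm) measurableSet_Iio
  simpa [Iio_union_Ici] using hIio.union hIci

end Kernel

section ExpConv

variable {a b C : ℝ} {f H : ℝ → ℝ}

lemma hasDerivAt_setIntegral_Iic (hf : Continuous f) (hint : ∀ t, IntegrableOn f (Iic t))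
    (t : ℝ) : HasDerivAt (fun u => ∫ s in Iic u, f s) (f t) t := by
  have h : (fun u => ∫ s in Iic u, f s) = fun u => (∫ s in Iic 0, f s) + ∫ s in 0..u, f s :=
    funext fun u => by rw [← intervalIntegral.integral_Iic_sub_Iic (hint 0) (hint u)]; ring
  rw [h]
  exact (hf.integral_hasStrictDerivAt 0 t).hasDerivAt.const_add _

lemma hasDerivAt_setIntegral_Ioi (hf : Continuous f) (hint : ∀ t, IntegrableOn f (Ioi t))
    (t : ℝ) : HasDerivAt (fun u => ∫ s in Ioi u, f s) (-f t) t := by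
  have h : (fun u => ∫ s in Ioi u, f s) = fun u => (∫ s in Ioi 0, f s) - ∫ s in 0..u, f s :=
    funext fun u => by rw [← intervalIntegral.integral_Ioi_sub_Ioi' (hint 0) (hint u)]; ring
  rw [h]
  exact (hf.integral_hasStrictDerivAt 0 t).hasDerivAt.const_sub _

lemma integrableOn_exp_mul_mul_Iic (ha : 0 < a) (hH : Continuous H) (hC : ∀ t, |H t| ≤ C)
    (t : ℝ) : IntegrableOn (fun s => exp (a * s) * H s) (Iic t) :=
  (integrableOn_exp_mul_Iic ha t).mul_bdd hH.aestronglyMeasurable (ae_of_all _ hC)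

lemma integrableOn_exp_mul_mul_Ioi (ha : a < 0) (hH : Continuous H) (hC : ∀ t, |H t| ≤ C)
    (t : ℝ) : IntegrableOn (fun s => exp (a * s) * H s) (Ioi t) :=
  (integrableOn_exp_mul_Ioi ha t).mul_bdd hH.aestronglyMeasurable (ae_of_all _ hC)

def expConvIic (a : ℝ) (H : ℝ → ℝ) (t : ℝ) : ℝ :=
  exp (a * t) * ∫ s in Iic t, exp (-a * s) * H s

def expConvIoi (b : ℝ) (H : ℝ → ℝ) (t : ℝ) : ℝ :=
  exp (b * t) * ∫ s in Ioi t, exp (-b * s) * H s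

lemma exp_mul_mul_exp_neg_mul (a t x : ℝ) : exp (a * t) * (exp (-a * t) * x) = x := by
  rw [← mul_assoc, ← exp_add, neg_mul, add_neg_cancel, exp_zero, one_mul]

lemma hasDerivAt_exp_mul (a t : ℝ) : HasDerivAt (fun u => exp (a * u)) (exp (a * t) * a) t := by
  simpa using ((hasDerivAt_id t).const_mul a).exp

lemma hasDerivAt_expConvIic (ha : a < 0) (hH : Continuous H) (hC : ∀ t, |H t| ≤ C) (t : ℝ) :
    HasDerivAt (expConvIic a H) (a * expConvIic a H t + H t) t := by
  have hI := hasDerivAt_setIntegral_Iic (f := fun s => exp (-a * s) * H s) (by fun_prop)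
    (integrableOn_exp_mul_mul_Iic (neg_pos.mpr ha) hH hC) t
  refine ((hasDerivAt_exp_mul a t).mul hI).congr_deriv ?_
  rw [exp_mul_mul_exp_neg_mul, expConvIic]
  ring

lemma hasDerivAt_expConvIoi (hb : 0 < b) (hH : Continuous H) (hC : ∀ t, |H t| ≤ C) (t : ℝ) :
    HasDerivAt (expConvIoi b H) (b * expConvIoi b H t - H t) t := by
  have hI := hasDerivAt_setIntegral_Ioi (f := fun s => exp (-b * s) * H s) (by fun_prop)
    (integrableOn_exp_mul_mul_Ioi (neg_neg_iff_pos.mpr hb) hH hC) t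
  refine ((hasDerivAt_exp_mul b t).mul hI).congr_deriv ?_
  rw [mul_neg, exp_mul_mul_exp_neg_mul, expConvIoi]
  ring

end ExpConv

lemma contDiff_two_of_hasDerivAt_deriv {f f'' : ℝ → ℝ} (hf : Differentiable ℝ f)
    (hf' : ∀ t, HasDerivAt (deriv f) (f'' t) t) (hf'' : Continuous f'') : ContDiff ℝ 2 f := by
  rw [show (2 : WithTop ℕ∞) = 1 + 1 from rfl, contDiff_succ_iff_deriv]
  refine ⟨hf, by simp, contDiff_one_iff_deriv.mpr ⟨fun t => (hf' t).differentiableAt, ?_⟩⟩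
  rwa [funext fun t => (hf' t).deriv]

section ExpConvODE

variable {a b C : ℝ} {H : ℝ → ℝ}

def expConv (a b : ℝ) (H : ℝ → ℝ) (t : ℝ) : ℝ := expConvIic a H t + expConvIoi b H t

variable (ha : a < 0) (hb : 0 < b) (hH : Continuous H) (hC : ∀ t, |H t| ≤ C)
include ha hb hH hC

lemma hasDerivAt_expConv (t : ℝ) :
    HasDerivAt (expConv a b H) (a * expConvIic a H t + b * expConvIoi b H t) t :=
  ((hasDerivAt_expConvIic ha hH hC t).add (hasDerivAt_expConvIoi hb hH hC t)).congr_deriv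
    (by ring)

lemma hasDerivAt_deriv_expConv (t : ℝ) :
    HasDerivAt (deriv (expConv a b H))
      (a * (a * expConvIic a H t + H t) + b * (b * expConvIoi b H t - H t)) t := by
  rw [funext fun t => (hasDerivAt_expConv ha hb hH hC t).deriv]
  exact ((hasDerivAt_expConvIic ha hH hC t).const_mul a).add
    ((hasDerivAt_expConvIoi hb hH hC t).const_mul b)

lemma contDiff_two_expConv : ContDiff ℝ 2 (expConv a b H) := by
  have hL : Continuous (expConvIic a H) :=
    continuous_iff_continuousAt.mpr fun t => (hasDerivAt_expConvIic ha hH hC t).continuousAt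
  have hU : Continuous (expConvIoi b H) :=
    continuous_iff_continuousAt.mpr fun t => (hasDerivAt_expConvIoi hb hH hC t).continuousAt
  exact contDiff_two_of_hasDerivAt_deriv
    (fun t => (hasDerivAt_expConv ha hb hH hC t).differentiableAt)
    (hasDerivAt_deriv_expConv ha hb hH hC) (by fun_prop)

lemma expConv_ode {D c γ : ℝ} (hDa : D * a ^ 2 - c * a - γ = 0)
    (hDb : D * b ^ 2 - c * b - γ = 0) (t : ℝ) :
    D * deriv (deriv (expConv a b H)) t - c * deriv (expConv a b H) t - γ * expConv a b H t =
      D * (a - b) * H t := by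
  rw [(hasDerivAt_deriv_expConv ha hb hH hC t).deriv, (hasDerivAt_expConv ha hb hH hC t).deriv,
    expConv]
  linear_combination expConvIic a H t * hDa + expConvIoi b H t * hDb

end ExpConvODE

section GreenFunction

variable {D γ c C : ℝ} {H : ℝ → ℝ}

def k1Conv (D γ c : ℝ) (H : ℝ → ℝ) (t : ℝ) : ℝ := ∫ s, k1Tilde D γ c (t - s) * H s

lemma k1Conv_eq_integral_mul_comp_sub (t : ℝ) :
    k1Conv D γ c H t = ∫ u, k1Tilde D γ c u * H (t - u) := by
  simpa [k1Conv] using integral_sub_left_eq_self (fun u => k1Tilde D γ c u * H (t - u)) volume t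

lemma integrable_k1Tilde_mul (hD : 0 < D) (hγ : 0 < γ) (hH : Continuous H)
    (hC : ∀ t, |H t| ≤ C) (t : ℝ) : Integrable fun s => k1Tilde D γ c (t - s) * H s := by
  simpa using (integrable_mul_comp_sub (τ := id) (integrable_k1Tilde hD hγ) measurable_id hH hC
    t).comp_sub_left t

lemma abs_k1Conv_le (hD : 0 < D) (hγ : 0 < γ) (hC : ∀ t, |H t| ≤ C) (t : ℝ) :
    |k1Conv D γ c H t| ≤ (∫ u, ‖k1Tilde D γ c u‖) * C := by
  rw [k1Conv_eq_integral_mul_comp_sub]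
  exact abs_integral_mul_comp_sub_le (τ := id) (integrable_k1Tilde hD hγ) hC t

lemma tendsto_k1Conv_atBot (hD : 0 < D) (hγ : 0 < γ) (hH : Continuous H)
    (hC : ∀ t, |H t| ≤ C) (hH0 : Tendsto H atBot (𝓝 0)) :
    Tendsto (k1Conv D γ c H) atBot (𝓝 0) := by
  rw [funext k1Conv_eq_integral_mul_comp_sub]
  exact tendsto_integral_mul_comp_sub_atBot (τ := id) (integrable_k1Tilde hD hγ) measurable_id hH
    hC hH0

lemma k1Conv_eq_expConv (hD : 0 < D) (hγ : 0 < γ) (hH : Continuous H) (hC : ∀ t, |H t| ≤ C) :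
    k1Conv D γ c H =
      fun t => expConv (nuTilde D γ c) (muTilde D γ c) H t / √(c ^ 2 + 4 * D * γ) := by
  funext t
  have hint := integrable_k1Tilde_mul (c := c) hD hγ hH hC t
  have hIic : ∫ s in Iic t, k1Tilde D γ c (t - s) * H s =
      expConvIic (nuTilde D γ c) H t / √(c ^ 2 + 4 * D * γ) := by
    rw [expConvIic, ← integral_const_mul, ← integral_div]
    refine setIntegral_congr_fun measurableSet_Iic fun s hs => ?_
    rw [k1Tilde_of_nonneg (sub_nonneg.mpr hs), mul_sub, sub_eq_add_neg, ← neg_mul, exp_add]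
    ring
  have hIoi : ∫ s in Ioi t, k1Tilde D γ c (t - s) * H s =
      expConvIoi (muTilde D γ c) H t / √(c ^ 2 + 4 * D * γ) := by
    rw [expConvIoi, ← integral_const_mul, ← integral_div]
    refine setIntegral_congr_fun measurableSet_Ioi fun s hs => ?_
    rw [k1Tilde_of_neg (sub_neg.mpr hs), mul_sub, sub_eq_add_neg, ← neg_mul, exp_add]
    ring
  rw [k1Conv, ← intervalIntegral.integral_Iic_add_Ioi hint.integrableOn hint.integrableOn, hIic,
    hIoi, expConv, add_div]

lemma contDiff_two_k1Conv (hD : 0 < D) (hγ : 0 < γ) (hH : Continuous H)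
    (hC : ∀ t, |H t| ≤ C) : ContDiff ℝ 2 (k1Conv D γ c H) := by
  rw [k1Conv_eq_expConv hD hγ hH hC]
  exact (contDiff_two_expConv (nuTilde_neg hD hγ) (muTilde_pos hD hγ) hH hC).div_const _

lemma k1Conv_ode (hD : 0 < D) (hγ : 0 < γ) (hH : Continuous H) (hC : ∀ t, |H t| ≤ C)
    (t : ℝ) :
    D * deriv (deriv (k1Conv D γ c H)) t - c * deriv (k1Conv D γ c H) t -
      γ * k1Conv D γ c H t + H t = 0 := by
  have hode := expConv_ode (nuTilde_neg (c := c) hD hγ) (muTilde_pos hD hγ) hH hC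
    (nuTilde_isRoot hD hγ) (muTilde_isRoot hD hγ) t
  have hdiff := mul_nuTilde_sub_muTilde (γ := γ) (c := c) hD
  have hr : √(c ^ 2 + 4 * D * γ) ≠ 0 :=
    ((abs_nonneg c).trans_lt (abs_lt_sqrt_discr hD hγ)).ne'
  rw [k1Conv_eq_expConv hD hγ hH hC]
  set y := expConv (nuTilde D γ c) (muTilde D γ c) H
  set r := √(c ^ 2 + 4 * D * γ)
  have hy' : deriv (fun t => y t / r) = fun t => deriv y t / r := funext fun _ => deriv_div_const _
  rw [hy', deriv_div_const]
  field_simp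
  linear_combination hode + H t * hdiff

end GreenFunction

theorem immature_component_general
    (K : ℝ → ℝ → ℝ) (g : ℝ → ℝ) (D γ c : ℝ) (φ : ℝ → ℝ)
    (hD : 0 < D) (hγ : 0 < γ)
    -- (H0)
    (hKint : IntegrableOn (fun x : ℝ × ℝ => K x.1 x.2) (Set.Ioi 0 ×ˢ Set.univ))
    -- (H1)
    (hgc : ContinuousOn g (Set.Ici 0))
    (hg0 : g 0 = 0)
    -- φ is bounded, continuous, nonnegative, vanishing at -∞
    (hφc : Continuous φ)
    (hφnn : ∀ t, 0 ≤ φ t)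
    (hφbdd : ∃ M, ∀ t, |φ t| ≤ M)
    (hφbot : Tendsto φ atBot (nhds 0)) :
    -- ψ is well defined and bounded
    (∀ t : ℝ, Integrable (fun s => k1Tilde D γ c (t - s) * Hop K g c φ s)) ∧
    (∃ M, ∀ t, |psiImm K g D γ c φ t| ≤ M) ∧
    -- ψ ∈ C² and solves the immature profile equation
    ContDiff ℝ 2 (psiImm K g D γ c φ) ∧
    (∀ t : ℝ, D * deriv (deriv (psiImm K g D γ c φ)) t - c * deriv (psiImm K g D γ c φ) t -
        γ * psiImm K g D γ c φ t + Hop K g c φ t = 0) ∧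
    -- ψ vanishes at -∞
    Tendsto (psiImm K g D γ c φ) atBot (nhds 0) := by
  obtain ⟨C, hC⟩ := exists_abs_comp_le hgc hφnn hφbdd
  have hG : Continuous fun t => g (φ t) := hgc.comp_continuous hφc hφnn
  have hH : Continuous (Hop K g c φ) := continuous_Hop hKint hG hC
  have hHC := abs_Hop_le (c := c) hKint hG hC
  have hH0 := tendsto_Hop_atBot (c := c) hKint hG hC (tendsto_comp_atBot hgc hg0 hφnn hφbot)
  have hψ : psiImm K g D γ c φ = k1Conv D γ c (Hop K g c φ) := rfl
  rw [hψ]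
  exact ⟨integrable_k1Tilde_mul hD hγ hH hHC, ⟨_, abs_k1Conv_le hD hγ hHC⟩,
    contDiff_two_k1Conv hD hγ hH hHC, k1Conv_ode hD hγ hH hHC,
    tendsto_k1Conv_atBot hD hγ hH hHC hH0⟩

/-- Recovery of the immature component of the population system. -/
theorem immature_component
    (K : ℝ → ℝ → ℝ) (g : ℝ → ℝ) (g'0 D γ c : ℝ) (φ : ℝ → ℝ)
    (hD : 0 < D) (hγ : 0 < γ)
    -- (H0)
    (hKmeas : Measurable fun x : ℝ × ℝ => K x.1 x.2)
    (hKnn : ∀ s w, 0 ≤ K s w)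
    (hKint : IntegrableOn (fun x : ℝ × ℝ => K x.1 x.2) (Set.Ioi 0 ×ˢ Set.univ))
    (hKnorm : (∫ s in Set.Ioi (0:ℝ), ∫ w : ℝ, K s w) = 1)
    -- (H1)
    (hgc : ContinuousOn g (Set.Ici 0))
    (hgnn : ∀ s, 0 ≤ s → 0 ≤ g s)
    (hg0 : g 0 = 0)
    (hgpos : ∀ s, 0 < s → 0 < g s)
    (hgd : HasDerivWithinAt g g'0 (Set.Ici 0) 0)
    -- φ is bounded, continuous, nonnegative, vanishing at -∞
    (hφc : Continuous φ)
    (hφnn : ∀ t, 0 ≤ φ t)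
    (hφbdd : ∃ M, ∀ t, |φ t| ≤ M)
    (hφbot : Tendsto φ atBot (nhds 0)) :
    -- ψ is well defined and bounded
    (∀ t : ℝ, Integrable (fun s => k1Tilde D γ c (t - s) * Hop K g c φ s)) ∧
    (∃ M, ∀ t, |psiImm K g D γ c φ t| ≤ M) ∧
    -- ψ ∈ C² and solves the immature profile equation
    ContDiff ℝ 2 (psiImm K g D γ c φ) ∧
    (∀ t : ℝ, D * deriv (deriv (psiImm K g D γ c φ)) t - c * deriv (psiImm K g D γ c φ) t -
        γ * psiImm K g D γ c φ t + Hop K g c φ t = 0) ∧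
    -- ψ vanishes at -∞
    Tendsto (psiImm K g D γ c φ) atBot (nhds 0) :=
  immature_component_general K g D γ c φ hD hγ hKint hgc hg0 hφc hφnn hφbdd hφbot
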